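/- Let l₁, l₂, l₃ ∈ ℂ be nonzero. Then T possesses no nonzero proper principal 𝔇-stable ideal. -/

import Mathlib

noncomputable section

open MvPolynomial

abbrev R3 : Type := MvPolynomial (Fin 3) ℂ

def chi : R3 :=
  C (484/49) * (C 50000 * (X 1) ^ 6 - C 1000 * (X 0) ^ 2 * X 2 * (X 1) ^ 4
    + (X 0) ^ 5 * (X 1) ^ 4 - C 2 * (X 0) ^ 4 * (X 2) ^ 2 * (X 1) ^ 2
    + C 1800 * X 0 * (X 2) ^ 3 * (X 1) ^ 2 + (X 0) ^ 3 * (X 2) ^ 4 - C 864 * (X 2) ^ 5)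

/-- The relation `W² - χ` inside `ℂ[X, Y, Z, W]`. -/
def relIdeal : Ideal (MvPolynomial (Fin 4) ℂ) :=
  Ideal.span {(X 3) ^ 2 - (rename Fin.castSucc chi)}

/-- `T = ℂ[X, Y, Z, W]/(W² - χ)`. -/
abbrev T : Type := MvPolynomial (Fin 4) ℂ ⧸ relIdeal

def mkT : MvPolynomial (Fin 4) ℂ →ₐ[ℂ] T := Ideal.Quotient.mkₐ ℂ relIdeal

def xT : T := mkT (X 0)
def yT : T := mkT (X 1)
def zT : T := mkT (X 2)
/-- `w`, the class of `W` in `T`. -/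
def wT : T := mkT (X 3)

/-- The canonical map `ℂ[X, Y, Z] → T`. -/
def toT : R3 →ₐ[ℂ] T := mkT.comp (rename Fin.castSucc)

/-- The structure map `ℂ → T`. -/
def CT : ℂ → T := algebraMap ℂ T

/-- `D` is the extension of `d*` to `T`. -/
def IsDStarT (D : Derivation ℂ T T) : Prop :=
  D xT = CT (4/5) * yT * (xT ^ 3 - CT 1050 * zT) ∧
  D yT = CT (1/10) * xT * (CT 7 * zT ^ 2 - CT 15 * xT * yT ^ 2) ∧
  D zT = -(CT (2/5)) * yT * (xT ^ 2 * zT + CT 875 * yT ^ 2) ∧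
  D wT = -(xT ^ 2 * yT) * wT

/-- `D` is the extension of `e*` to `T`. -/
def IsEStarT (D : Derivation ℂ T T) : Prop :=
  D xT = -(CT 1152) * zT ^ 2 + CT 240 * xT * yT ^ 2 + CT (4/5) * xT ^ 3 * zT ∧
  D yT = yT * (-(CT (6/5)) * xT ^ 2 * zT + CT 200 * yT ^ 2) ∧
  D zT = -(CT 240) * yT ^ 2 * zT - CT (8/5) * xT ^ 2 * zT ^ 2 + CT (4/5) * xT ^ 3 * yT ^ 2 ∧
  D wT = -(CT 2) * (xT ^ 2 * zT - CT 300 * yT ^ 2) * wT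

/-- `D` is the extension of `f*` to `T`. -/
def IsFStarT (D : Derivation ℂ T T) : Prop :=
  D xT = yT * (CT 550 * yT ^ 2 - CT (4/5) * xT ^ 2 * zT) ∧
  D yT = zT * (CT (7/2) * xT * yT ^ 2 - CT (33/10) * zT ^ 2) ∧
  D zT = yT * (CT (11/4) * xT ^ 2 * yT ^ 2 - CT (59/20) * xT * zT ^ 2) ∧
  D wT = -(CT (1/2)) * xT * yT * zT * wT

/-- `D` is the derivation `d_*` attached to the constant `l₁`. -/
def IsDLow (l₁ : ℂ) (D : Derivation ℂ T T) : Prop :=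
  D xT = 0 ∧ D yT = 0 ∧ D zT = CT l₁ * wT ∧ D wT = CT (l₁ / 2) * toT (pderiv 2 chi)

/-- `D` is the derivation `e_*` attached to the constant `l₂`. -/
def IsELow (l₂ : ℂ) (D : Derivation ℂ T T) : Prop :=
  D xT = 0 ∧ D zT = 0 ∧ D yT = CT l₂ * wT ∧ D wT = CT (l₂ / 2) * toT (pderiv 1 chi)

/-- `D` is the derivation `f_*` attached to the constant `l₃`. -/
def IsFLow (l₃ : ℂ) (D : Derivation ℂ T T) : Prop :=
  D yT = 0 ∧ D zT = 0 ∧ D xT = CT l₃ * wT ∧ D wT = CT (l₃ / 2) * toT (pderiv 0 chi)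

/-- `Q` is stable under all six derivations `d₁, d₂, e₁, e₂, f₁, f₂`. -/
def DStableT (dT eT fT dS eS fS : Derivation ℂ T T) (Q : Ideal T) : Prop :=
  (∀ q ∈ Q, (dT + dS) q ∈ Q) ∧ (∀ q ∈ Q, (dT - dS) q ∈ Q) ∧
  (∀ q ∈ Q, (eT + eS) q ∈ Q) ∧ (∀ q ∈ Q, (eT - eS) q ∈ Q) ∧
  (∀ q ∈ Q, (fT + fS) q ∈ Q) ∧ (∀ q ∈ Q, (fT - fS) q ∈ Q)


/-!
Stability under `d₁` and `d₂` gives stability under `d_*` (since `2` is invertible), and likewise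
for `e_*` and `f_*`. Each of these has the form `l • (w ∂ᵢ + ½ ∂ᵢχ ∂_w)`, so it anticommutes with
the conjugation `w ↦ -w` of `T`. If `I = (q)` with `q = a + b w`, then `D q = t q`, and the norm
`N = q q̄ = a² - b² χ ∈ ℂ[X, Y, Z]` satisfies `D N = (t - t̄) N`; comparing `w`-components gives
`l ∂ᵢN = 2 d N`, so `N ∣ ∂ᵢN`, which forces `∂ᵢN = 0` by comparing degrees in the `i`-th variable.
Hence `N` is a constant. A nonzero constant is a unit in `I`; and `N = 0` means `a² = b² χ`, which
forces `q = 0` because `χ` has odd degree `5` in `X`.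
-/

namespace MvPolynomial

variable {R σ : Type*}

theorem degreeOf_pderiv_lt [CommSemiring R] {i : σ} {p : MvPolynomial σ R}
    (h : pderiv i p ≠ 0) : degreeOf i (pderiv i p) < degreeOf i p := by
  have hsucc : ∀ m ∈ (pderiv i p).support, m i + 1 ≤ degreeOf i p := fun m hm => by
    have hcoeff : coeff (m + Finsupp.single i 1) p ≠ 0 := by
      intro h0
      rw [mem_support_iff, coeff_pderiv, h0, zero_mul] at hm
      exact hm rfl
    simpa using monomial_le_degreeOf i (mem_support_iff.2 hcoeff)
  obtain ⟨m, hm⟩ := ne_zero_iff.1 h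
  rw [degreeOf_lt_iff (by have := hsucc m (mem_support_iff.2 hm); omega)]
  exact hsucc

theorem pderiv_eq_zero_of_dvd [CommSemiring R] [NoZeroDivisors R] {i : σ}
    {p : MvPolynomial σ R} (h : p ∣ pderiv i p) : pderiv i p = 0 := by
  by_contra hne
  obtain ⟨q, hq⟩ := h
  have hp : p ≠ 0 := by rintro rfl; simp at hne
  have hq0 : q ≠ 0 := by rintro rfl; simp [hq] at hne
  have := degreeOf_pderiv_lt hne
  rw [hq, degreeOf_mul_eq hp hq0] at this
  omega

theorem eq_C_of_pderiv_eq_zero [CommSemiring R] [NoZeroDivisors R] [CharZero R]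
    {p : MvPolynomial σ R} (h : ∀ i, pderiv i p = 0) : p = C (coeff 0 p) := by
  classical
  ext m
  rcases eq_or_ne m 0 with rfl | hm
  · simp
  obtain ⟨i, hi⟩ := Finsupp.ne_iff.1 hm
  have hle : Finsupp.single i 1 ≤ m := Finsupp.single_le_iff.2 (Nat.one_le_iff_ne_zero.2 hi)
  have hcoeff := coeff_pderiv (i := i) p (m - Finsupp.single i 1)
  rw [h i, tsub_add_cancel_of_le hle, coeff_zero, eq_comm, mul_eq_zero] at hcoeff
  rw [coeff_C, if_neg (Ne.symm hm)]
  exact hcoeff.resolve_right (Nat.cast_add_one_ne_zero _)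

theorem eq_zero_of_sq_eq_sq_mul [CommSemiring R] [NoZeroDivisors R] {i : σ}
    {a b c : MvPolynomial σ R} (hc : Odd (degreeOf i c)) (h : a ^ 2 = b ^ 2 * c) :
    a = 0 ∧ b = 0 := by
  have hc0 : c ≠ 0 := by rintro rfl; simp at hc
  have hb : b = 0 := by
    by_contra hb
    have ha : a ≠ 0 := by rintro rfl; simp_all
    have := congrArg (degreeOf i) h
    rw [degreeOf_mul_eq (pow_ne_zero 2 hb) hc0, degreeOf_pow_eq i a 2 ha,
      degreeOf_pow_eq i b 2 hb] at this
    obtain ⟨k, hk⟩ := hc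
    omega
  subst hb
  simpa using h

end MvPolynomial

theorem Derivation.map_algHom_eq_sum_pderiv {R A σ : Type*} [CommSemiring R] [CommSemiring A]
    [Algebra R A] [Fintype σ] (D : Derivation R A A) (f : MvPolynomial σ R →ₐ[R] A)
    (p : MvPolynomial σ R) :
    D (f p) = ∑ i, f (pderiv i p) * D (f (X i)) := by
  classical
  induction p using MvPolynomial.induction_on with
  | C c => simp [MvPolynomial.algHom_C]
  | add p q hp hq => simp [hp, hq, add_mul, Finset.sum_add_distrib]
  | mul_X p j hp =>
    simp [Derivation.leibniz, hp, pderiv_X, Pi.single_apply, add_mul, Finset.sum_add_distrib,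
      Finset.mul_sum, apply_ite f, mul_assoc]

theorem Derivation.apply_mem_of_add_apply_mem_of_sub_apply_mem {R A : Type*} [CommRing R]
    [CommRing A] [Algebra R A] (h2 : IsUnit (2 : A)) {D E : Derivation R A A} {I : Ideal A} {q : A}
    (hadd : (D + E) q ∈ I) (hsub : (D - E) q ∈ I) : E q ∈ I := by
  have htwice : 2 * E q = (D + E) q - (D - E) q := by simp only [Derivation.add_apply, Derivation.sub_apply]; ring
  rw [← I.unit_mul_mem_iff_mem h2, htwice]
  exact I.sub_mem hadd hsub

theorem Derivation.map_mul_map_self_of_anticomm {R A : Type*} [CommSemiring R] [CommRing A]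
    [Algebra R A] (D : Derivation R A A) (σ : A →+* A) (hσ : ∀ a, D (σ a) = -σ (D a)) {q t : A}
    (h : D q = t * q) : D (q * σ q) = (t - σ t) * (q * σ q) := by
  rw [Derivation.leibniz, hσ, h, map_mul, smul_eq_mul, smul_eq_mul]
  ring

lemma toT_X_zero : toT (X 0) = xT := by simp [toT, xT]
lemma toT_X_one : toT (X 1) = yT := by simp [toT, yT]
lemma toT_X_two : toT (X 2) = zT := by simp [toT, zT]

lemma toT_C (c : ℂ) : toT (C c) = CT c := toT.commutes c

lemma mkT_rename (p : R3) : mkT (rename Fin.castSucc p) = toT p := rfl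

lemma mkT_relation : mkT (X 3 ^ 2 - rename Fin.castSucc chi) = 0 :=
  Ideal.Quotient.eq_zero_iff_mem.2 (Ideal.subset_span rfl)

lemma wT_sq : wT ^ 2 = toT chi := by
  rw [← sub_eq_zero, wT, ← mkT_rename, ← map_pow, ← map_sub, mkT_relation]

lemma exists_eq_toT_add_toT_mul_wT (t : T) : ∃ a b : R3, t = toT a + toT b * wT := by
  obtain ⟨p, rfl⟩ := Ideal.Quotient.mkₐ_surjective ℂ relIdeal t
  induction p using MvPolynomial.induction_on with
  | C c => exact ⟨C c, 0, by simp⟩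
  | add p q hp hq =>
    obtain ⟨a, b, hab⟩ := hp
    obtain ⟨a', b', hab'⟩ := hq
    exact ⟨a + a', b + b', by rw [map_add, hab, hab']; simp only [map_add]; ring⟩
  | mul_X p i hp =>
    obtain ⟨a, b, hab⟩ := hp
    obtain ⟨a', b', hab'⟩ : ∃ a' b' : R3, mkT (X i) = toT a' + toT b' * wT := by
      induction i using Fin.lastCases with
      | last => exact ⟨0, 1, by simp [wT]⟩
      | cast j => exact ⟨X j, 0, by simp [← mkT_rename]⟩
    refine ⟨a * a' + b * b' * chi, a * b' + a' * b, ?_⟩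
    rw [map_mul, hab, show Ideal.Quotient.mkₐ ℂ relIdeal (X i) = mkT (X i) from rfl, hab']
    simp only [map_add, map_mul, ← wT_sq]
    ring

lemma eq_zero_of_toT_mul_wT_eq_zero {a : R3} (h : toT a * wT = 0) : a = 0 := by
  have hmem : rename Fin.castSucc a * X 3 ∈ relIdeal := Ideal.Quotient.eq_zero_iff_mem.1 h
  obtain ⟨q, hq⟩ := Ideal.mem_span_singleton'.1 hmem
  -- read `ℂ[X, Y, Z, W]` as `ℂ[X, Y, Z][W]`, where the monic `W² - χ` cannot divide `a W`
  let φ : MvPolynomial (Fin 4) ℂ →ₐ[ℂ] Polynomial R3 :=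
    aeval (Fin.lastCases Polynomial.X fun j => Polynomial.C (X j))
  have hφ (p : R3) : φ (rename Fin.castSucc p) = Polynomial.C p := by
    induction p using MvPolynomial.induction_on with
    | C c => simp [φ]
    | add p q hp hq => simp [hp, hq]
    | mul_X p j hp => simp_all [φ]
  have hX : φ (X 3) = Polynomial.X := by
    rw [aeval_X]
    exact Fin.lastCases_last
  have hdvd : Polynomial.X ^ 2 - Polynomial.C chi ∣ Polynomial.C a * Polynomial.X := by
    refine ⟨φ q, ?_⟩
    have := congrArg φ hq
    rw [map_mul, map_mul, map_sub, map_pow, hφ, hφ, hX] at this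
    rw [← this, mul_comm]
  have := Polynomial.eq_zero_of_dvd_of_natDegree_lt hdvd (by
    rw [Polynomial.natDegree_X_pow_sub_C]
    exact (Polynomial.natDegree_C_mul_le a _).trans_lt (by simp))
  simpa using this

def conjW : MvPolynomial (Fin 4) ℂ →ₐ[ℂ] MvPolynomial (Fin 4) ℂ :=
  aeval (Fin.lastCases (-X (Fin.last 3)) fun j => X j.castSucc)

lemma conjW_rename (p : R3) : conjW (rename Fin.castSucc p) = rename Fin.castSucc p := by
  rw [conjW, aeval_rename]
  congr 1
  ext j
  simp

lemma conjW_X_three : conjW (X 3) = -X 3 := by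
  rw [conjW, aeval_X]
  exact Fin.lastCases_last

def conjT : T →ₐ[ℂ] T :=
  Ideal.Quotient.liftₐ relIdeal (mkT.comp conjW) fun p hp => by
    obtain ⟨q, rfl⟩ := Ideal.mem_span_singleton'.1 hp
    have hgen : conjW (X 3 ^ 2 - rename Fin.castSucc chi) = X 3 ^ 2 - rename Fin.castSucc chi := by
      rw [map_sub, map_pow, conjW_X_three, conjW_rename, neg_sq]
    rw [AlgHom.comp_apply, map_mul, hgen, map_mul, mkT_relation, mul_zero]

lemma conjT_mkT (p : MvPolynomial (Fin 4) ℂ) : conjT (mkT p) = mkT (conjW p) := rfl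

lemma conjT_toT (p : R3) : conjT (toT p) = toT p := by
  rw [← mkT_rename, conjT_mkT, conjW_rename]

lemma conjT_wT : conjT wT = -wT := by
  rw [wT, conjT_mkT, conjW_X_three, map_neg]

lemma isUnit_two_T : IsUnit (2 : T) := by
  simpa only [map_ofNat] using (IsUnit.mk0 (2 : ℂ) two_ne_zero).map (algebraMap ℂ T)

lemma toT_mul_conjT (a b : R3) :
    (toT a + toT b * wT) * conjT (toT a + toT b * wT) = toT (a ^ 2 - b ^ 2 * chi) := by
  rw [map_add, map_mul, conjT_toT, conjT_toT, conjT_wT, map_sub, map_mul, map_pow, map_pow, ← wT_sq]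
  ring

lemma odd_degreeOf_chi : Odd (degreeOf 0 chi) := by
  rw [← natDegree_finSuccEquiv]
  have h1 : (X 1 : R3) = X (Fin.succ 0) := rfl
  have h2 : (X 2 : R3) = X (Fin.succ 1) := rfl
  rw [chi, h1, h2]
  simp only [map_mul, map_add, map_sub, map_pow, finSuccEquiv_X_zero, finSuccEquiv_X_succ,
    ← MvPolynomial.algebraMap_eq, AlgEquiv.commutes, Polynomial.algebraMap_apply]
  apply (show ∀ n : ℕ, n = 5 → Odd n by rintro _ rfl; decide)
  compute_degree!

def IsLowerDeriv (i : Fin 3) (l : ℂ) (D : Derivation ℂ T T) : Prop :=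
  (∀ p : R3, D (toT p) = toT (pderiv i p) * (CT l * wT)) ∧
    D wT = CT (l / 2) * toT (pderiv i chi)

lemma IsLowerDeriv.of_apply_X {i : Fin 3} {l : ℂ} {D : Derivation ℂ T T}
    (hX : ∀ j, D (toT (X j)) = (Pi.single i (CT l * wT) : Fin 3 → T) j)
    (hw : D wT = CT (l / 2) * toT (pderiv i chi)) : IsLowerDeriv i l D :=
  ⟨fun p => by
    rw [D.map_algHom_eq_sum_pderiv toT]
    simp only [hX, Pi.single_apply, mul_ite, mul_zero, Finset.sum_ite_eq', Finset.mem_univ,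
      if_true], hw⟩

lemma IsDLow.isLowerDeriv {l : ℂ} {D : Derivation ℂ T T} (h : IsDLow l D) :
    IsLowerDeriv 2 l D := by
  obtain ⟨hx, hy, hz, hw⟩ := h
  refine .of_apply_X (fun j => ?_) hw
  fin_cases j <;> simp [toT_X_zero, toT_X_one, toT_X_two, hx, hy, hz]

lemma IsELow.isLowerDeriv {l : ℂ} {D : Derivation ℂ T T} (h : IsELow l D) :
    IsLowerDeriv 1 l D := by
  obtain ⟨hx, hz, hy, hw⟩ := h
  refine .of_apply_X (fun j => ?_) hw
  fin_cases j <;> simp [toT_X_zero, toT_X_one, toT_X_two, hx, hy, hz]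

lemma IsFLow.isLowerDeriv {l : ℂ} {D : Derivation ℂ T T} (h : IsFLow l D) :
    IsLowerDeriv 0 l D := by
  obtain ⟨hy, hz, hx, hw⟩ := h
  refine .of_apply_X (fun j => ?_) hw
  fin_cases j <;> simp [toT_X_zero, toT_X_one, toT_X_two, hx, hy, hz]

namespace IsLowerDeriv

variable {i : Fin 3} {l : ℂ} {D : Derivation ℂ T T}

lemma map_conjT (hD : IsLowerDeriv i l D) (t : T) : D (conjT t) = -conjT (D t) := by
  obtain ⟨a, b, rfl⟩ := exists_eq_toT_add_toT_mul_wT t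
  simp only [map_add, map_mul, Derivation.leibniz, smul_eq_mul, conjT_toT, conjT_wT, hD.1, hD.2,
    CT, AlgHom.commutes, map_neg]
  ring

lemma pderiv_eq_zero (hD : IsLowerDeriv i l D) (hl : l ≠ 0) {q : T} (hq : q ∣ D q) {g : R3}
    (hg : toT g = q * conjT q) : pderiv i g = 0 := by
  obtain ⟨t, ht⟩ := hq
  obtain ⟨c, d, rfl⟩ := exists_eq_toT_add_toT_mul_wT t
  have hDg := D.map_mul_map_self_of_anticomm conjT.toRingHom hD.map_conjT (ht.trans (mul_comm _ _))
  simp only [AlgHom.toRingHom_eq_coe, RingHom.coe_coe, ← hg, hD.1] at hDg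
  have hw : toT (C l * pderiv i g - C 2 * d * g) * wT = 0 := by
    rw [map_add, map_mul, conjT_toT, conjT_toT, conjT_wT] at hDg
    simp only [map_sub, map_mul, toT_C, show CT 2 = 2 from map_ofNat _ 2]
    linear_combination hDg
  have hlg : C l * pderiv i g = C 2 * d * g := sub_eq_zero.1 (eq_zero_of_toT_mul_wT_eq_zero hw)
  apply pderiv_eq_zero_of_dvd
  refine ⟨C l⁻¹ * C 2 * d, ?_⟩
  calc pderiv i g = C l⁻¹ * (C l * pderiv i g) := by
        rw [← mul_assoc, ← C_mul, inv_mul_cancel₀ hl, C_1, one_mul]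
    _ = g * (C l⁻¹ * C 2 * d) := by rw [hlg]; ring

end IsLowerDeriv

theorem no_nonzero_proper_principal_Dstable_ideal_general
    (l₁ l₂ l₃ : ℂ) (h1 : l₁ ≠ 0) (h2 : l₂ ≠ 0) (h3 : l₃ ≠ 0)
    (dT eT fT dS eS fS : Derivation ℂ T T)
    (hdS : IsDLow l₁ dS) (heS : IsELow l₂ eS) (hfS : IsFLow l₃ fS) :
    ¬ ∃ I : Ideal T, I ≠ ⊥ ∧ I ≠ ⊤ ∧ I.IsPrincipal ∧
      DStableT dT eT fT dS eS fS I := by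
  rintro ⟨_, hbot, htop, ⟨q, rfl⟩, hd₁, hd₂, he₁, he₂, hf₁, hf₂⟩
  have hq : q ∈ Ideal.span {q} := Ideal.mem_span_singleton_self q
  have hdvd {D E : Derivation ℂ T T} (hadd : (D + E) q ∈ Ideal.span {q})
      (hsub : (D - E) q ∈ Ideal.span {q}) : q ∣ E q :=
    Ideal.mem_span_singleton.1 <|
      D.apply_mem_of_add_apply_mem_of_sub_apply_mem isUnit_two_T hadd hsub
  obtain ⟨a, b, hab⟩ := exists_eq_toT_add_toT_mul_wT q
  have hg : toT (a ^ 2 - b ^ 2 * chi) = q * conjT q := by rw [hab, toT_mul_conjT]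
  have hpderiv : ∀ i, pderiv i (a ^ 2 - b ^ 2 * chi) = 0 := by
    intro i
    fin_cases i
    · exact hfS.isLowerDeriv.pderiv_eq_zero h3 (hdvd (hf₁ _ hq) (hf₂ _ hq)) hg
    · exact heS.isLowerDeriv.pderiv_eq_zero h2 (hdvd (he₁ _ hq) (he₂ _ hq)) hg
    · exact hdS.isLowerDeriv.pderiv_eq_zero h1 (hdvd (hd₁ _ hq) (hd₂ _ hq)) hg
  have hconst := eq_C_of_pderiv_eq_zero hpderiv
  rcases eq_or_ne (coeff 0 (a ^ 2 - b ^ 2 * chi)) 0 with h0 | h0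
  · rw [h0, C_0, sub_eq_zero] at hconst
    obtain ⟨rfl, rfl⟩ := eq_zero_of_sq_eq_sq_mul odd_degreeOf_chi hconst
    exact hbot (by simp [hab])
  · refine htop (Ideal.eq_top_of_isUnit_mem _ (Ideal.mul_mem_right (conjT q) _ hq) ?_)
    rw [← hg, hconst, toT_C]
    exact (IsUnit.mk0 _ h0).map (algebraMap ℂ T)

/-- For nonzero `l₁, l₂, l₃ ∈ ℂ`, the ring `T` possesses no nonzero proper
principal `𝔇`-stable ideal. -/
theorem no_nonzero_proper_principal_Dstable_ideal
    (l₁ l₂ l₃ : ℂ) (h1 : l₁ ≠ 0) (h2 : l₂ ≠ 0) (h3 : l₃ ≠ 0)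
    (dT eT fT dS eS fS : Derivation ℂ T T)
    (hdT : IsDStarT dT) (heT : IsEStarT eT) (hfT : IsFStarT fT)
    (hdS : IsDLow l₁ dS) (heS : IsELow l₂ eS) (hfS : IsFLow l₃ fS) :
    ¬ ∃ I : Ideal T, I ≠ ⊥ ∧ I ≠ ⊤ ∧ I.IsPrincipal ∧
      DStableT dT eT fT dS eS fS I :=
  no_nonzero_proper_principal_Dstable_ideal_general l₁ l₂ l₃ h1 h2 h3 dT eT fT dS eS fS hdS heS hfS
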